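/- arXiv:1609.05270 — 4 statements merged into one kernel-verified Lean document; each statement's English description precedes it below -/
import Mathlib

section
/- In the quantum symplectic space 𝒳, for all i, j ∈ I⁺ and k ∈ I the following relations hold: Ω_i x_k = q² x_k Ω_i if −n ≤ k ≤ −i; Ω_i x_k = x_k Ω_i if −i < k < i; Ω_i x_k = q^{−2} x_k Ω_i if i ≤ k ≤ n; moreover Ω_i Ω_j = Ω_j Ω_i. -/
/-!
Each product `x_{-j} x_j` `q`-commutes with a generator `x_l`: the first relation gives the factor
`q²` for `l < -j`, `1` for `-j < l < j` and `q⁻²` for `j < l`. Splitting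
`Ω_i = Σ_{i ≤ j < m} q^{j-i} x_{-j} x_j + q^{m-i} Ω_m` at `m = |l|` therefore leaves only
`Ω_m x_{∓m}`, which follows from `Ω_m = x_{-m} x_m + q Ω_{m+1}`, the second relation and the fact
that `Ω_{m+1}` commutes with `x_{±m}`. Finally `Ω_j` is a combination of the `x_{-m} x_m` with
`m ≥ j ≥ i`, and the factors `q²` and `q⁻²` of `x_{-m}` and `x_m` against `Ω_i` cancel.
-/

noncomputable section

/-- The `q`-integer `[m]_q = (q^m - q^{-m})/(q - q⁻¹)`. -/
def qnum {k : Type*} [Field k] (q : k) (m : ℤ) : k :=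
  (q ^ m - q ^ (-m)) / (q - q⁻¹)

/-- The element `Ω_i = Σ_{j=i}^{n} q^{j-i} x_{-j} x_j` (with `Ω_{n+1} = 0`). -/
def Om {k X : Type*} [Field k] [Ring X] [Algebra k X]
    (q : k) (x : ℤ → X) (n : ℕ) (i : ℤ) : X :=
  ∑ j ∈ Finset.Icc i (n : ℤ), q ^ (j - i) • (x (-j) * x j)

def QCommute {R A : Type*} [SMul R A] [Mul A] (s : R) (a b : A) : Prop :=
  a * b = s • (b * a)

namespace QCommute

section Algebra

variable {R A : Type*} [CommSemiring R] [Semiring A] [Algebra R A] {s t : R} {a b c : A}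

theorem mul_left (hac : QCommute s a c) (hbc : QCommute t b c) : QCommute (s * t) (a * b) c := by
  unfold QCommute at *
  rw [mul_assoc, hbc, mul_smul_comm, ← mul_assoc, hac, smul_mul_assoc, smul_smul, mul_comm t,
    mul_assoc]

theorem mul_right (hab : QCommute s a b) (hac : QCommute t a c) : QCommute (s * t) a (b * c) := by
  unfold QCommute at *
  rw [← mul_assoc, hab, smul_mul_assoc, mul_assoc, hac, mul_smul_comm, smul_smul, mul_assoc]

theorem smul_left (h : QCommute s a b) (r : R) : QCommute s (r • a) b := by
  unfold QCommute at *
  rw [smul_mul_assoc, h, mul_smul_comm, smul_comm]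

theorem add_left (hac : QCommute s a c) (hbc : QCommute s b c) : QCommute s (a + b) c := by
  unfold QCommute at *
  rw [add_mul, hac, hbc, mul_add, smul_add]

theorem sum_left {ι : Type*} (S : Finset ι) (f : ι → A) (h : ∀ i ∈ S, QCommute s (f i) c) :
    QCommute s (∑ i ∈ S, f i) c := by
  unfold QCommute at *
  rw [Finset.sum_mul, Finset.mul_sum, Finset.smul_sum]
  exact Finset.sum_congr rfl h

theorem commute (h : QCommute (1 : R) a b) : Commute a b := by
  rw [QCommute, one_smul] at h
  exact h

end Algebra

theorem symm {k A : Type*} [Field k] [Semiring A] [Module k A] {s : k} {a b : A} (hs : s ≠ 0)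
    (h : QCommute s a b) : QCommute s⁻¹ b a := by
  rw [QCommute, h, smul_smul, inv_mul_cancel₀ hs, one_smul]

end QCommute

/-- The defining relations of `𝒳`; only the generators `x i` with `0 < |i| ≤ n` are constrained. -/
structure IsQuantumSymplectic {k X : Type*} [Field k] [Ring X] [Algebra k X]
    (n : ℕ) (q : k) (x : ℤ → X) : Prop where
  qcommute : ∀ i j : ℤ, -(n : ℤ) ≤ i → j ≤ n → i ≠ 0 → j ≠ 0 → i < j → j ≠ -i →
    QCommute q (x j) (x i)
  mul_neg : ∀ i : ℤ, 1 ≤ i → i ≤ n →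
    x i * x (-i) = (q ^ 2) • (x (-i) * x i) + (q ^ 2 * (q - q⁻¹)) • Om q x n (i + 1)

section QuantumSymplectic

variable {k X : Type*} [Field k] [Ring X] [Algebra k X] {n : ℕ} {q : k} {x : ℤ → X}

theorem Om_eq_sum_Ico_add (hq : q ≠ 0) {i m : ℤ} (him : i ≤ m) (hm : m ≤ n + 1) :
    Om q x n i = ∑ j ∈ Finset.Ico i m, q ^ (j - i) • (x (-j) * x j) + q ^ (m - i) • Om q x n m := by
  rw [Om, Om, ← Finset.Ico_add_one_right_eq_Icc, ← Finset.Ico_add_one_right_eq_Icc,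
    ← Finset.Ico_union_Ico_eq_Ico him hm,
    Finset.sum_union (Finset.Ico_disjoint_Ico_consecutive _ _ _), Finset.smul_sum]
  congr 1
  refine Finset.sum_congr rfl fun j _ => ?_
  rw [smul_smul, ← zpow_add₀ hq, sub_add_sub_cancel']

theorem Om_eq_add (hq : q ≠ 0) {i : ℤ} (hi : i ≤ n) :
    Om q x n i = x (-i) * x i + q • Om q x n (i + 1) := by
  rw [Om_eq_sum_Ico_add hq (by omega : i ≤ i + 1) (by omega), Finset.Ico_add_one_right_eq_Icc,
    Finset.Icc_self, Finset.sum_singleton, sub_self, zpow_zero, one_smul, add_sub_cancel_left,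
    zpow_one]

namespace IsQuantumSymplectic

theorem qcommute_neg_mul_self_of_lt_neg (hx : IsQuantumSymplectic n q x) {j l : ℤ} (hj : 1 ≤ j)
    (hl : -(n : ℤ) ≤ l) (hlj : l < -j) : QCommute (q ^ 2) (x (-j) * x j) (x l) := by
  rw [sq]
  exact (hx.qcommute l (-j) hl (by omega) (by omega) (by omega) hlj (by omega)).mul_left
    (hx.qcommute l j hl (by omega) (by omega) (by omega) (by omega) (by omega))

theorem commute_neg_mul_self_of_neg_lt_of_lt (hx : IsQuantumSymplectic n q x) (hq : q ≠ 0)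
    {j l : ℤ} (hjn : j ≤ n) (hl : -j < l) (hlj : l < j) (hl0 : l ≠ 0) :
    Commute (x (-j) * x j) (x l) := by
  have h := ((hx.qcommute (-j) l (by omega) (by omega) (by omega) hl0 hl (by omega)).symm
    hq).mul_left (hx.qcommute l j (by omega) hjn hl0 (by omega) hlj (by omega))
  rw [inv_mul_cancel₀ hq] at h
  exact h.commute

theorem qcommute_neg_mul_self_of_lt (hx : IsQuantumSymplectic n q x) (hq : q ≠ 0) {j l : ℤ}
    (hj : 1 ≤ j) (hjl : j < l) (hl : l ≤ n) :
    QCommute (q ^ (-2 : ℤ)) (x (-j) * x j) (x l) := by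
  have h := ((hx.qcommute (-j) l (by omega) hl (by omega) (by omega) (by omega) (by omega)).symm
    hq).mul_left ((hx.qcommute j l (by omega) hl (by omega) (by omega) hjl (by omega)).symm hq)
  rwa [← mul_inv, ← sq, ← zpow_natCast, ← zpow_neg] at h

theorem Om_commute_of_neg_lt_of_lt (hx : IsQuantumSymplectic n q x) (hq : q ≠ 0) {i l : ℤ}
    (hl : -i < l) (hli : l < i) (hl0 : l ≠ 0) : Commute (Om q x n i) (x l) :=
  Commute.sum_left _ _ _ fun j hj => by
    rw [Finset.mem_Icc] at hj
    exact (hx.commute_neg_mul_self_of_neg_lt_of_lt hq hj.2 (by omega) (by omega) hl0).smul_left _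


theorem Om_qcommute_neg_self (hx : IsQuantumSymplectic n q x) (hq : q ≠ 0) {m : ℤ} (hm : 1 ≤ m)
    (hmn : m ≤ n) : QCommute (q ^ 2) (Om q x n m) (x (-m)) := by
  have hc : Commute (Om q x n (m + 1)) (x (-m)) :=
    hx.Om_commute_of_neg_lt_of_lt hq (by omega) (by omega) (by omega)
  unfold QCommute
  rw [Om_eq_add hq hmn, add_mul, mul_assoc, hx.mul_neg m hm hmn, smul_mul_assoc, hc.eq]
  simp only [mul_add, mul_smul_comm, smul_add, smul_smul]
  match_scalars <;> grind

theorem Om_qcommute_self (hx : IsQuantumSymplectic n q x) (hq : q ≠ 0) {m : ℤ} (hm : 1 ≤ m)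
    (hmn : m ≤ n) : QCommute (q ^ (-2 : ℤ)) (Om q x n m) (x m) := by
  have hc : Commute (Om q x n (m + 1)) (x m) :=
    hx.Om_commute_of_neg_lt_of_lt hq (by omega) (by omega) (by omega)
  have hneg : x (-m) * x m = (q ^ 2)⁻¹ • (x m * x (-m)) - (q - q⁻¹) • Om q x n (m + 1) := by
    rw [hx.mul_neg m hm hmn]
    match_scalars <;> grind
  rw [QCommute, zpow_neg, zpow_ofNat]
  conv_lhs => rw [Om_eq_add hq hmn, add_mul, hneg]
  rw [Om_eq_add hq hmn]
  simp only [mul_add, sub_mul, mul_smul_comm, smul_mul_assoc, smul_add, smul_smul, mul_assoc, hc.eq]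
  match_scalars <;> grind


theorem Om_qcommute_of_le_neg (hx : IsQuantumSymplectic n q x) (hq : q ≠ 0) {i l : ℤ}
    (hi : 1 ≤ i) (hl : -(n : ℤ) ≤ l) (hli : l ≤ -i) : QCommute (q ^ 2) (Om q x n i) (x l) := by
  obtain ⟨m, rfl⟩ : ∃ m, l = -m := ⟨-l, (neg_neg l).symm⟩
  rw [Om_eq_sum_Ico_add hq (by omega : i ≤ m) (by omega)]
  refine (QCommute.sum_left _ _ fun j hj => ?_).add_left
    ((hx.Om_qcommute_neg_self hq (by omega) (by omega)).smul_left _)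
  rw [Finset.mem_Ico] at hj
  exact (hx.qcommute_neg_mul_self_of_lt_neg (by omega) hl (by omega)).smul_left _

theorem Om_qcommute_of_le (hx : IsQuantumSymplectic n q x) (hq : q ≠ 0) {i l : ℤ}
    (hi : 1 ≤ i) (hil : i ≤ l) (hl : l ≤ n) : QCommute (q ^ (-2 : ℤ)) (Om q x n i) (x l) := by
  rw [Om_eq_sum_Ico_add hq hil (by omega)]
  refine (QCommute.sum_left _ _ fun j hj => ?_).add_left
    ((hx.Om_qcommute_self hq (by omega) hl).smul_left _)
  rw [Finset.mem_Ico] at hj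
  exact (hx.qcommute_neg_mul_self_of_lt hq (by omega) hj.2 hl).smul_left _

theorem Om_commute_Om_of_le (hx : IsQuantumSymplectic n q x) (hq : q ≠ 0) {i j : ℤ} (hi : 1 ≤ i)
    (hij : i ≤ j) : Commute (Om q x n i) (Om q x n j) :=
  Commute.sum_right _ _ _ fun m hm => by
    rw [Finset.mem_Icc] at hm
    have h := (hx.Om_qcommute_of_le_neg hq hi (by omega) (by omega : -m ≤ -i)).mul_right
      (hx.Om_qcommute_of_le hq hi (by omega) hm.2)
    rw [← zpow_natCast, ← zpow_add₀ hq, Nat.cast_ofNat, add_neg_cancel, zpow_zero] at h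
    exact h.commute.smul_right _

end IsQuantumSymplectic

end QuantumSymplectic

theorem stmt4_general {k X : Type*} [Field k] [Ring X] [Algebra k X]
    (n : ℕ) (q : k) (hq : q ≠ 0)
    (x : ℤ → X)
    (hrel1 : ∀ i j : ℤ, -(n : ℤ) ≤ i → j ≤ n → i ≠ 0 → j ≠ 0 → i < j → j ≠ -i →
      x j * x i = q • (x i * x j))
    (hrel2 : ∀ i : ℤ, 1 ≤ i → i ≤ n →
      x i * x (-i) = (q ^ 2) • (x (-i) * x i) + (q ^ 2 * (q - q⁻¹)) • Om q x n (i + 1)) :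
    (∀ i l : ℤ, 1 ≤ i → i ≤ n → -(n : ℤ) ≤ l → l ≤ -i →
        Om q x n i * x l = (q ^ 2) • (x l * Om q x n i)) ∧
    (∀ i l : ℤ, 1 ≤ i → i ≤ n → -i < l → l < i → l ≠ 0 →
        Om q x n i * x l = x l * Om q x n i) ∧
    (∀ i l : ℤ, 1 ≤ i → i ≤ n → i ≤ l → l ≤ n →
        Om q x n i * x l = (q ^ (-2 : ℤ)) • (x l * Om q x n i)) ∧
    (∀ i j : ℤ, 1 ≤ i → i ≤ n → 1 ≤ j → j ≤ n →
        Om q x n i * Om q x n j = Om q x n j * Om q x n i) := by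
  have hx : IsQuantumSymplectic n q x := ⟨hrel1, hrel2⟩
  refine ⟨fun i l hi _ hl hli => hx.Om_qcommute_of_le_neg hq hi hl hli,
    fun i l _ _ hl hli hl0 => hx.Om_commute_of_neg_lt_of_lt hq hl hli hl0,
    fun i l hi _ hil hl => hx.Om_qcommute_of_le hq hi hil hl,
    fun i j hi _ hj _ => ?_⟩
  rcases le_total i j with hij | hji
  · exact hx.Om_commute_Om_of_le hq hi hij
  · exact (hx.Om_commute_Om_of_le hq hj hji).symm

/-- In the quantum symplectic space (any algebra whose generators `x_i`, `i ∈ I`,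
satisfy the defining relations), for all `i, j ∈ I⁺` and `k ∈ I`:
`Ω_i x_k = q² x_k Ω_i` if `-n ≤ k ≤ -i`; `Ω_i x_k = x_k Ω_i` if `-i < k < i`;
`Ω_i x_k = q⁻² x_k Ω_i` if `i ≤ k ≤ n`; and `Ω_i Ω_j = Ω_j Ω_i`. -/
theorem stmt4 {k X : Type*} [Field k] [CharZero k] [Ring X] [Algebra k X]
    (n : ℕ) (hn : 2 ≤ n) (q : k) (hq : q ≠ 0) (hroot : ∀ r : ℕ, r ≠ 0 → q ^ r ≠ 1)
    (x : ℤ → X)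
    (hrel1 : ∀ i j : ℤ, -(n : ℤ) ≤ i → j ≤ n → i ≠ 0 → j ≠ 0 → i < j → j ≠ -i →
      x j * x i = q • (x i * x j))
    (hrel2 : ∀ i : ℤ, 1 ≤ i → i ≤ n →
      x i * x (-i) = (q ^ 2) • (x (-i) * x i) + (q ^ 2 * (q - q⁻¹)) • Om q x n (i + 1)) :
    (∀ i l : ℤ, 1 ≤ i → i ≤ n → -(n : ℤ) ≤ l → l ≤ -i →
        Om q x n i * x l = (q ^ 2) • (x l * Om q x n i)) ∧
    (∀ i l : ℤ, 1 ≤ i → i ≤ n → -i < l → l < i → l ≠ 0 →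
        Om q x n i * x l = x l * Om q x n i) ∧
    (∀ i l : ℤ, 1 ≤ i → i ≤ n → i ≤ l → l ≤ n →
        Om q x n i * x l = (q ^ (-2 : ℤ)) • (x l * Om q x n i)) ∧
    (∀ i j : ℤ, 1 ≤ i → i ≤ n → 1 ≤ j → j ≤ n →
        Om q x n i * Om q x n j = Om q x n j * Om q x n i) :=
  stmt4_general n q hq x hrel1 hrel2
end
end

section
/- In the quantum symplectic space 𝒳, for every i ∈ I⁺ and every integer m ≥ 1: x_i x_{−i}^m = q^{2m} x_{−i}^m x_i + q^{m+1} λ [m]_q Ω_{i+1} x_{−i}^{m−1} and x_i^m x_{−i} = q^{2m} x_{−i} x_i^m + q^{m+1} λ [m]_q Ω_{i+1} x_i^{m−1}. -/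
noncomputable section

/-!
Both identities come from one rule in any algebra: if `a b = s b a + t c` with `c` commuting
with `b`, then `a bᵐ⁺¹ = sᵐ⁺¹ bᵐ⁺¹ a + t (1 + s + ⋯ + sᵐ) c bᵐ`, by moving `a` past one `b` at a
time; read in the opposite algebra it gives the mirrored rule for `aᵐ⁺¹ b`. Here `a = x_i`,
`b = x_{-i}`, `s = q²`, `t = q² λ` and `c = Ω_{i+1}`, which commutes with `x_{±i}` because each
product `x_{-j} x_j` with `j > i` does: its two factors skew-commute with `x_{±i}` by the same
factor `q`. Finally `q² λ (1 + q² + ⋯ + q^{2(m-1)}) = q^{2m+1} - q = q^{m+1} λ [m]_q`.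
-/

open Finset

section SkewCommutation

variable {R A : Type*} [CommSemiring R] [Semiring A] [Algebra R A]

theorem commute_mul_of_smul_comm {u v w : A} {s : R}
    (hu : w * u = s • (u * w)) (hv : v * w = s • (w * v)) : Commute (u * v) w := by
  change u * v * w = w * (u * v)
  rw [mul_assoc, hv, mul_smul_comm, ← mul_assoc, ← mul_assoc, hu, smul_mul_assoc]

theorem mul_pow_succ_of_mul_eq {a b c : A} {s t : R}
    (h : a * b = s • (b * a) + t • c) (hc : Commute c b) (m : ℕ) :
    a * b ^ (m + 1) = s ^ (m + 1) • (b ^ (m + 1) * a)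
      + (t * ∑ j ∈ range (m + 1), s ^ j) • (c * b ^ m) := by
  induction m with
  | zero => simpa using h
  | succ m ih =>
    calc a * b ^ (m + 2) = (a * b ^ (m + 1)) * b := by rw [mul_assoc, ← pow_succ]
      _ = s ^ (m + 1) • (b ^ (m + 1) * (a * b))
            + (t * ∑ j ∈ range (m + 1), s ^ j) • (c * b ^ (m + 1)) := by
        rw [ih, add_mul, smul_mul_assoc, smul_mul_assoc, mul_assoc, mul_assoc, ← pow_succ]
      _ = _ := by
        rw [h, mul_add, mul_smul_comm, mul_smul_comm, ← mul_assoc, ← pow_succ,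
          ← (hc.pow_right (m + 1)).eq, sum_range_succ _ (m + 1)]
        match_scalars <;> ring

theorem pow_succ_mul_of_mul_eq {a b c : A} {s t : R}
    (h : a * b = s • (b * a) + t • c) (hc : Commute c a) (m : ℕ) :
    a ^ (m + 1) * b = s ^ (m + 1) • (b * a ^ (m + 1))
      + (t * ∑ j ∈ range (m + 1), s ^ j) • (c * a ^ m) := by
  have hop : MulOpposite.op b * MulOpposite.op a
      = s • (MulOpposite.op a * MulOpposite.op b) + t • MulOpposite.op c := by
    simp only [← MulOpposite.op_mul, ← MulOpposite.op_smul, ← MulOpposite.op_add, h]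
  have hmirror := mul_pow_succ_of_mul_eq hop hc.op m
  simp only [← MulOpposite.op_pow, ← MulOpposite.op_mul, ← MulOpposite.op_smul,
    ← MulOpposite.op_add, MulOpposite.op_inj] at hmirror
  rwa [← (hc.pow_right m).eq] at hmirror

end SkewCommutation

theorem pow_succ_mul_sub_inv_mul_qnum {k : Type*} [Field k] (q : k) (m : ℕ) :
    q ^ (m + 1) * (q - q⁻¹) * qnum q m = q ^ 2 * (q - q⁻¹) * ∑ j ∈ range m, (q ^ 2) ^ j := by
  rcases eq_or_ne (q - q⁻¹) 0 with hlam | hlam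
  · simp [hlam] -- also covers `q = 0` and `q² = 1`, where `qnum` divides by zero
  have hq : q ≠ 0 := by
    rintro rfl
    simp at hlam
  have hgeom := geom_sum_mul (q ^ 2) m
  rw [qnum, mul_assoc, mul_div_cancel₀ _ hlam, zpow_neg, zpow_natCast]
  field_simp
  linear_combination -q ^ (m + 1) * hgeom

theorem Om_commute {k X : Type*} [Field k] [Ring X] [Algebra k X] {q : k} {x : ℤ → X} {n : ℕ}
    {i l : ℤ} (hi : 1 ≤ i) (hin : i ≤ n) (hl : l = i ∨ l = -i)
    (hrel1 : ∀ i j : ℤ, -(n : ℤ) ≤ i → j ≤ n → i ≠ 0 → j ≠ 0 → i < j → j ≠ -i →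
      x j * x i = q • (x i * x j)) :
    Commute (Om q x n (i + 1)) (x l) := by
  refine Commute.sum_left _ _ _ fun j hj =>
    (commute_mul_of_smul_comm (s := q) ?_ ?_).smul_left (q ^ (j - (i + 1)))
  all_goals
    rw [mem_Icc] at hj
    exact hrel1 _ _ (by omega) (by omega) (by omega) (by omega) (by omega) (by omega)

theorem stmt5_general {k X : Type*} [Field k] [Ring X] [Algebra k X]
    (n : ℕ) (q : k)
    (x : ℤ → X)
    (hrel1 : ∀ i j : ℤ, -(n : ℤ) ≤ i → j ≤ n → i ≠ 0 → j ≠ 0 → i < j → j ≠ -i →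
      x j * x i = q • (x i * x j))
    (hrel2 : ∀ i : ℤ, 1 ≤ i → i ≤ n →
      x i * x (-i) = (q ^ 2) • (x (-i) * x i) + (q ^ 2 * (q - q⁻¹)) • Om q x n (i + 1)) :
    ∀ i : ℤ, 1 ≤ i → i ≤ n → ∀ m : ℕ, 1 ≤ m →
      x i * x (-i) ^ m
        = (q ^ (2 * m)) • (x (-i) ^ m * x i)
          + (q ^ (m + 1) * (q - q⁻¹) * qnum q m) • (Om q x n (i + 1) * x (-i) ^ (m - 1)) ∧
      x i ^ m * x (-i)
        = (q ^ (2 * m)) • (x (-i) * x i ^ m)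
          + (q ^ (m + 1) * (q - q⁻¹) * qnum q m) • (Om q x n (i + 1) * x i ^ (m - 1)) := by
  intro i hi hin m hm
  obtain ⟨m, rfl⟩ := Nat.exists_eq_add_of_le' hm
  rw [pow_succ_mul_sub_inv_mul_qnum, Nat.add_sub_cancel, pow_mul]
  exact ⟨mul_pow_succ_of_mul_eq (hrel2 i hi hin) (Om_commute hi hin (.inr rfl) hrel1) m,
    pow_succ_mul_of_mul_eq (hrel2 i hi hin) (Om_commute hi hin (.inl rfl) hrel1) m⟩

/-- In the quantum symplectic space, for `i ∈ I⁺` and `m ≥ 1`: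
`x_i x_{-i}^m = q^{2m} x_{-i}^m x_i + q^{m+1} λ [m]_q Ω_{i+1} x_{-i}^{m-1}` and
`x_i^m x_{-i} = q^{2m} x_{-i} x_i^m + q^{m+1} λ [m]_q Ω_{i+1} x_i^{m-1}`. -/
theorem stmt5 {k X : Type*} [Field k] [CharZero k] [Ring X] [Algebra k X]
    (n : ℕ) (hn : 2 ≤ n) (q : k) (hq : q ≠ 0) (hroot : ∀ r : ℕ, r ≠ 0 → q ^ r ≠ 1)
    (x : ℤ → X)
    (hrel1 : ∀ i j : ℤ, -(n : ℤ) ≤ i → j ≤ n → i ≠ 0 → j ≠ 0 → i < j → j ≠ -i →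
      x j * x i = q • (x i * x j))
    (hrel2 : ∀ i : ℤ, 1 ≤ i → i ≤ n →
      x i * x (-i) = (q ^ 2) • (x (-i) * x i) + (q ^ 2 * (q - q⁻¹)) • Om q x n (i + 1)) :
    ∀ i : ℤ, 1 ≤ i → i ≤ n → ∀ m : ℕ, 1 ≤ m →
      x i * x (-i) ^ m
        = (q ^ (2 * m)) • (x (-i) ^ m * x i)
          + (q ^ (m + 1) * (q - q⁻¹) * qnum q m) • (Om q x n (i + 1) * x (-i) ^ (m - 1)) ∧
      x i ^ m * x (-i)
        = (q ^ (2 * m)) • (x (-i) * x i ^ m)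
          + (q ^ (m + 1) * (q - q⁻¹) * qnum q m) • (Om q x n (i + 1) * x i ^ (m - 1)) :=
  stmt5_general n q x hrel1 hrel2
end
end

section
/- In the quantum symplectic space 𝒳, for every i ∈ I⁺ and every a ∈ ℕ^{2n}: (i) x_{−i} x^a = (∏_{j=−n}^{−i−1} q^{a_j}) x^{a+ε_{−i}}; (ii) x^a x_i = (∏_{j=i+1}^{n} q^{a_j}) x^{a+ε_i}; (iii) x_i x^a = (∏_{j=−n}^{i−1} q^{a_j}) q^{a_{−i}} x^{a+ε_i} + (∏_{j=−n}^{−i−1} q^{−a_j}) q^{a_{−i}+1} λ [a_{−i}]_q Ω_{i+1} x^{a−ε_{−i}}; (iv) x^a x_{−i} = (∏_{j=1−i}^{n} q^{a_j}) q^{a_i} x^{a+ε_{−i}} + (∏_{k=i}^{n} q^{a_k})(∏_{j=−n}^{−i−1} q^{−2a_j}) q λ [a_i]_q Ω_{i+1} x^{a−ε_i}. (In (iii) and (iv) the coefficient [a_{−i}]_q, resp. [a_i]_q, vanishes when the corresponding entry of a is 0, so the terms with shifted exponent a−ε are well defined.) -/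
noncomputable section

/-- The increasing list of indices `-n, …, -1, 1, …, n`. -/
def idxList (n : ℕ) : List ℤ :=
  ((List.range (2 * n + 1)).map (fun t => (t : ℤ) - n)).filter (fun i => i != 0)

/-- The normal monomial `x^a = x_{-n}^{a_{-n}} ⋯ x_n^{a_n}`. -/
def mono {X : Type*} [Monoid X] (x : ℤ → X) (n : ℕ) (a : ℤ → ℕ) : X :=
  ((idxList n).map (fun i => x i ^ a i)).prod

/-!
Write `x^a = L · x_{-i}^{a_{-i}} · M · x_i^{a_i} · R`, where `L`, `M`, `R` are the ordered blocks
of generators with indices below `-i`, strictly between `-i` and `i`, and above `i`. A generator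
`x_{±i}` `q`-commutes with each factor of `L` and `R`, and `x_i` (resp. `x_{-i}`) with each factor
of `M`, so it travels to its slot at the cost of a power of `q`. The only genuine reordering is
`x_i x_{-i}^m` (resp. `x_i^m x_{-i}`), obtained by induction from
`x_i x_{-i} = q² x_{-i} x_i + q² λ Ω_{i+1}`; there `Ω_{i+1}` commutes with `x_{±i}` and with `M`,
while `x_j Ω_{i+1} = q⁻² Ω_{i+1} x_j` for `j < -i` (descending induction on
`Ω_s = x_{-s} x_s + q Ω_{s+1}`).
The formula for `x_i^m x_{-i}` is the one for `x_i x_{-i}^m` read in the opposite algebra.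
-/

namespace QSymplectic

section QCommute

variable {k X : Type*} [Field k] [Ring X] [Algebra k X]

theorem mul_pow_of_mul_eq_smul {y z : X} {c : k} (h : y * z = c • (z * y)) (m : ℕ) :
    y * z ^ m = c ^ m • (z ^ m * y) := by
  induction m with
  | zero => simp
  | succ m ih =>
    rw [pow_succ, ← mul_assoc, ih, smul_mul_assoc, mul_assoc, h, mul_smul_comm, smul_smul,
      ← mul_assoc, ← pow_succ, pow_succ c]

theorem pow_mul_of_mul_eq_smul {y z : X} {c : k} (h : y * z = c • (z * y)) (m : ℕ) :
    y ^ m * z = c ^ m • (z * y ^ m) := by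
  induction m with
  | zero => simp
  | succ m ih =>
    rw [pow_succ', mul_assoc, ih, mul_smul_comm, ← mul_assoc, h, smul_mul_assoc, smul_smul,
      mul_assoc, ← pow_succ', pow_succ c]

theorem mul_mul_of_mul_eq_smul {y z : X} {c : k} (h : y * z = c • (z * y)) (w : X) :
    y * (z * w) = c • (z * (y * w)) := by
  rw [← mul_assoc, h, smul_mul_assoc, mul_assoc]

end QCommute

def monoOn {X : Type*} [Monoid X] (x : ℤ → X) (l : List ℤ) (b : ℤ → ℕ) : X :=
  (l.map fun j => x j ^ b j).prod

section MonoOn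

variable {X : Type*} [Monoid X] (x : ℤ → X) (b : ℤ → ℕ)

@[simp] theorem monoOn_nil : monoOn x [] b = 1 := rfl

@[simp] theorem monoOn_cons (j : ℤ) (l : List ℤ) :
    monoOn x (j :: l) b = x j ^ b j * monoOn x l b := List.prod_cons

@[simp] theorem monoOn_append (l₁ l₂ : List ℤ) :
    monoOn x (l₁ ++ l₂) b = monoOn x l₁ b * monoOn x l₂ b := by
  simp [monoOn]

theorem monoOn_congr {l : List ℤ} {b b' : ℤ → ℕ} (h : ∀ j ∈ l, b j = b' j) :
    monoOn x l b = monoOn x l b' :=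
  congrArg List.prod (List.map_congr_left fun j hj => by rw [h j hj])

theorem monoOn_filter (l : List ℤ) (p : ℤ → Bool) (h : ∀ j ∈ l, p j = false → b j = 0) :
    monoOn x (l.filter p) b = monoOn x l b := by
  induction l with
  | nil => rfl
  | cons j l ih =>
    have ih' := ih fun i hi => h i (List.mem_cons_of_mem j hi)
    cases hp : p j
    · simp [hp, ih', h j List.mem_cons_self hp]
    · simp [hp, ih']

end MonoOn

section QCommuteMonoOn

variable {k X : Type*} [Field k] [Ring X] [Algebra k X] {x : ℤ → X} {b : ℤ → ℕ}

theorem mul_monoOn_of_forall {y : X} {c : k} {l : List ℤ}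
    (h : ∀ j ∈ l, b j ≠ 0 → y * x j = c • (x j * y)) :
    y * monoOn x l b = monoOn (fun _ => c) l b • (monoOn x l b * y) := by
  induction l with
  | nil => simp
  | cons j l ih =>
    have hj : y * x j ^ b j = c ^ b j • (x j ^ b j * y) := by
      by_cases hb : b j = 0
      · simp [hb]
      · exact mul_pow_of_mul_eq_smul (h j List.mem_cons_self hb) _
    simp only [monoOn_cons]
    rw [← mul_assoc, hj, smul_mul_assoc, mul_assoc,
      ih fun i hi => h i (List.mem_cons_of_mem j hi), mul_smul_comm, smul_smul, mul_assoc]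

theorem monoOn_mul_of_forall {y : X} {c : k} {l : List ℤ}
    (h : ∀ j ∈ l, b j ≠ 0 → x j * y = c • (y * x j)) :
    monoOn x l b * y = monoOn (fun _ => c) l b • (y * monoOn x l b) := by
  induction l with
  | nil => simp
  | cons j l ih =>
    have hj : x j ^ b j * y = c ^ b j • (y * x j ^ b j) := by
      by_cases hb : b j = 0
      · simp [hb]
      · exact pow_mul_of_mul_eq_smul (h j List.mem_cons_self hb) _
    simp only [monoOn_cons]
    rw [mul_assoc,
      ih fun i hi => h i (List.mem_cons_of_mem j hi), mul_smul_comm, ← mul_assoc, hj,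
      smul_mul_assoc, smul_smul, mul_assoc, mul_comm (c ^ b j)]

theorem commute_monoOn_of_forall {y : X} {l : List ℤ} (h : ∀ j ∈ l, b j ≠ 0 → Commute y (x j)) :
    Commute y (monoOn x l b) := by
  refine Commute.list_prod_right _ _ fun u hu => ?_
  obtain ⟨j, hj, rfl⟩ := List.mem_map.1 hu
  by_cases hb : b j = 0
  · simp [hb]
  · exact (h j hj hb).pow_right _

end QCommuteMonoOn

def segment (s t : ℤ) : List ℤ :=
  (List.range (t + 1 - s).toNat).map fun u : ℕ => s + u

theorem mem_segment {s t j : ℤ} : j ∈ segment s t ↔ s ≤ j ∧ j ≤ t := by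
  simp only [segment, List.mem_map, List.mem_range]
  constructor
  · rintro ⟨u, hu, rfl⟩
    omega
  · rintro ⟨h₁, h₂⟩
    exact ⟨(j - s).toNat, by omega, by omega⟩

theorem nodup_segment (s t : ℤ) : (segment s t).Nodup :=
  (List.nodup_range).map fun u v h => by simpa using h

theorem segment_append {s r t : ℤ} (h₁ : s ≤ r) (h₂ : r ≤ t + 1) :
    segment s t = segment s (r - 1) ++ segment r t := by
  have hlen : (t + 1 - s).toNat = (r - 1 + 1 - s).toNat + (t + 1 - r).toNat := by omega
  rw [segment, hlen, List.range_add, List.map_append, List.map_map]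
  congr 2
  funext u
  simp only [Function.comp_apply, Nat.cast_add]
  omega

theorem segment_eq_cons {s t : ℤ} (h : s ≤ t) : segment s t = s :: segment (s + 1) t := by
  have hlen : (t + 1 - s).toNat = (t + 1 - (s + 1)).toNat + 1 := by omega
  rw [segment, hlen, List.range_succ_eq_map, List.map_cons, List.map_map]
  congr 1
  · simp
  · congr 1
    funext u
    simp only [Function.comp_apply, Nat.cast_succ]
    ring

theorem segment_eq_append_cons {s r t : ℤ} (h₁ : s ≤ r) (h₂ : r ≤ t) :
    segment s t = segment s (r - 1) ++ r :: segment (r + 1) t := by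
  rw [segment_append h₁ (by omega), segment_eq_cons h₂]

theorem prod_map_segment {M : Type*} [CommMonoid M] (f : ℤ → M) (s t : ℤ) :
    ((segment s t).map f).prod = ∏ j ∈ Finset.Icc s t, f j := by
  rw [← List.prod_toFinset f (nodup_segment s t)]
  congr 1
  ext j
  simp [mem_segment]

theorem prod_Icc_eq_mul_mul {M : Type*} [CommMonoid M] (f : ℤ → M) {s r t : ℤ}
    (h₁ : s ≤ r) (h₂ : r ≤ t) :
    ∏ j ∈ Finset.Icc s t, f j
      = (∏ j ∈ Finset.Icc s (r - 1), f j) * f r * ∏ j ∈ Finset.Icc (r + 1) t, f j := by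
  simp only [← prod_map_segment, segment_eq_append_cons h₁ h₂, List.map_append, List.map_cons,
    List.prod_append, List.prod_cons, mul_assoc]

theorem monoOn_const_segment {M : Type*} [CommMonoid M] (c : M) (b : ℤ → ℕ) (s t : ℤ) :
    monoOn (fun _ => c) (segment s t) b = ∏ j ∈ Finset.Icc s t, c ^ b j :=
  prod_map_segment _ s t

theorem idxList_eq_filter_segment (n : ℕ) :
    idxList n = (segment (-n) n).filter (fun i => i != 0) := by
  rw [idxList, segment, show ((n : ℤ) + 1 - -(n : ℤ)).toNat = 2 * n + 1 by omega]
  congr 1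
  simp only [List.pure_def, List.bind_eq_flatMap, ← List.map_eq_flatMap, List.map_map]
  exact List.map_congr_left fun u _ => by simp only [Function.comp_apply]; ring

section Reordering

variable {k X : Type*} [Field k] [Ring X] [Algebra k X]

/-- Also when `q - q⁻¹ = 0`, where `qnum q m` is a junk `0`: then both sides vanish. -/
theorem sub_inv_mul_qnum (q : k) (m : ℕ) :
    (q - q⁻¹) * qnum q m = q ^ m - (q ^ m)⁻¹ := by
  by_cases hl : q - q⁻¹ = 0
  · rw [hl, zero_mul, eq_comm, sub_eq_zero, ← inv_pow, ← sub_eq_zero.1 hl]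
  · rw [qnum, mul_div_cancel₀ _ hl, zpow_neg, zpow_natCast]

variable {q : k} {u v w : X}

theorem mul_pow_succ_of_mul_eq_smul_add (hq : q ≠ 0)
    (h : u * v = q ^ 2 • (v * u) + (q ^ 2 * (q - q⁻¹)) • w) (hw : Commute w v) (m : ℕ) :
    u * v ^ (m + 1) = q ^ (2 * (m + 1)) • (v ^ (m + 1) * u)
      + (q ^ (m + 2) * (q ^ (m + 1) - (q ^ (m + 1))⁻¹)) • (w * v ^ m) := by
  induction m with
  | zero => simpa [mul_sub, ← pow_succ] using h
  | succ m ih =>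
    have hw' : v ^ (m + 1) * w = w * v ^ (m + 1) := ((hw.pow_right _).eq).symm
    rw [pow_succ v (m + 1), ← mul_assoc, ih, add_mul, smul_mul_assoc, smul_mul_assoc, mul_assoc,
      h, mul_add (v ^ (m + 1)), mul_smul_comm, mul_smul_comm, hw']
    simp only [smul_add, smul_smul, mul_assoc, pow_succ]
    match_scalars <;> field_simp <;> ring

theorem mul_pow_of_mul_eq_smul_add (hq : q ≠ 0)
    (h : u * v = q ^ 2 • (v * u) + (q ^ 2 * (q - q⁻¹)) • w) (hw : Commute w v) (m : ℕ) :
    u * v ^ m = q ^ (2 * m) • (v ^ m * u)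
      + (q ^ (m + 1) * (q - q⁻¹) * qnum q m) • (w * v ^ (m - 1)) := by
  cases m with
  | zero => simp [qnum]
  | succ m =>
    rw [mul_pow_succ_of_mul_eq_smul_add hq h hw, mul_assoc _ (q - q⁻¹), sub_inv_mul_qnum]
    rfl

theorem pow_mul_of_mul_eq_smul_add (hq : q ≠ 0)
    (h : u * v = q ^ 2 • (v * u) + (q ^ 2 * (q - q⁻¹)) • w) (hw : Commute w u) (m : ℕ) :
    u ^ m * v = q ^ (2 * m) • (v * u ^ m)
      + (q ^ (m + 1) * (q - q⁻¹) * qnum q m) • (w * u ^ (m - 1)) := by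
  have hop : MulOpposite.op v * MulOpposite.op u
      = q ^ 2 • (MulOpposite.op u * MulOpposite.op v)
        + (q ^ 2 * (q - q⁻¹)) • MulOpposite.op w := by
    simp only [← MulOpposite.op_mul, ← MulOpposite.op_smul, ← MulOpposite.op_add, h]
  have := congrArg MulOpposite.unop
    (mul_pow_of_mul_eq_smul_add hq hop (hw.op : Commute _ (MulOpposite.op u)) m)
  simpa [← MulOpposite.op_pow, (hw.pow_right (m - 1)).eq] using this

end Reordering

structure IsQSymplectic {k X : Type*} [Field k] [Ring X] [Algebra k X]
    (q : k) (n : ℕ) (x : ℤ → X) : Prop where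
  comm : ∀ i j : ℤ, -(n : ℤ) ≤ i → j ≤ n → i ≠ 0 → j ≠ 0 → i < j → j ≠ -i →
    x j * x i = q • (x i * x j)
  comm_neg : ∀ i : ℤ, 1 ≤ i → i ≤ n →
    x i * x (-i) = (q ^ 2) • (x (-i) * x i) + (q ^ 2 * (q - q⁻¹)) • Om q x n (i + 1)

section Omega

variable {k X : Type*} [Field k] [Ring X] [Algebra k X] {q : k} {n : ℕ} {x : ℤ → X}

theorem Om_eq_add (hq : q ≠ 0) {s : ℤ} (hs : s ≤ n) :
    Om q x n s = x (-s) * x s + q • Om q x n (s + 1) := by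
  rw [Om, Om, ← Finset.insert_Icc_add_one_left_eq_Icc hs, Finset.sum_insert (by simp),
    sub_self, zpow_zero, one_smul, Finset.smul_sum]
  congr 1
  refine Finset.sum_congr rfl fun j _ => ?_
  rw [smul_smul, ← zpow_one_add₀ hq]
  ring_nf

namespace IsQSymplectic

variable (hx : IsQSymplectic q n x)
include hx

theorem commute_Om {s j : ℤ} (hj : j ≠ 0) (hsj : -s < j) (hjs : j < s) :
    Commute (Om q x n s) (x j) := by
  refine Commute.sum_left _ _ _ fun l hl => ?_
  rw [Finset.mem_Icc] at hl
  have h₁ : x l * x j = q • (x j * x l) :=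
    hx.comm j l (by omega) hl.2 hj (by omega) (by omega) (by omega)
  have h₂ : x j * x (-l) = q • (x (-l) * x j) :=
    hx.comm (-l) j (by omega) (by omega) (by omega) hj (by omega) (by omega)
  refine Commute.smul_left ?_ _
  show x (-l) * x l * x j = x j * (x (-l) * x l)
  rw [mul_assoc, h₁, mul_smul_comm, ← mul_assoc, ← mul_assoc, h₂, smul_mul_assoc]

theorem Om_mul_x_neg (hq : q ≠ 0) {s m : ℤ} (hs : 1 ≤ s) (hsm : s ≤ m) (hmn : m ≤ n) :
    Om q x n s * x (-m) = q ^ 2 • (x (-m) * Om q x n s) := by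
  induction s, hsm using Int.leInductionDown with
  | base =>
    have hc : Commute (Om q x n (m + 1)) (x (-m)) := hx.commute_Om (by omega) (by omega) (by omega)
    rw [Om_eq_add hq hmn, add_mul, smul_mul_assoc, mul_assoc, hx.comm_neg m hs hmn, hc.eq]
    simp only [mul_add, mul_smul_comm, smul_add, smul_smul]
    match_scalars
    · ring
    · field_simp
      ring
  | pred s hsm ih =>
    have h₁ : x (s - 1) * x (-m) = q • (x (-m) * x (s - 1)) :=
      hx.comm (-m) (s - 1) (by omega) (by omega) (by omega) (by omega) (by omega) (by omega)
    have h₂ : x (-(s - 1)) * x (-m) = q • (x (-m) * x (-(s - 1))) :=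
      hx.comm (-m) (-(s - 1)) (by omega) (by omega) (by omega) (by omega) (by omega) (by omega)
    rw [Om_eq_add hq (by omega), sub_add_cancel, add_mul, smul_mul_assoc, mul_assoc, h₁,
      mul_smul_comm, ← mul_assoc, h₂, ih (by omega)]
    simp only [mul_add, mul_smul_comm, smul_add, smul_smul, smul_mul_assoc, mul_assoc]
    match_scalars <;> ring

end IsQSymplectic

end Omega

theorem segment_eq_split {n : ℕ} {i : ℤ} (hi : 1 ≤ i) (hin : i ≤ n) :
    segment (-n) n
      = segment (-n) (-i - 1) ++ -i :: (segment (1 - i) (i - 1) ++ i :: segment (i + 1) n) := by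
  rw [segment_eq_append_cons (r := -i) (by omega) (by omega), neg_add_eq_sub,
    segment_eq_append_cons (s := 1 - i) (r := i) (by omega) hin]

section Monomial

variable {k X : Type*} [Field k] [Ring X] [Algebra k X] {q : k} {n : ℕ} {x : ℤ → X}
  {i : ℤ} {a : ℤ → ℕ}

theorem mono_eq_split (hi : 1 ≤ i) (hin : i ≤ n) (ha : a 0 = 0) {b : ℤ → ℕ}
    (hb : ∀ j, j ≠ i → j ≠ -i → b j = a j) :
    mono x n b = monoOn x (segment (-n) (-i - 1)) a * (x (-i) ^ b (-i) *
      (monoOn x (segment (1 - i) (i - 1)) a * (x i ^ b i * monoOn x (segment (i + 1) n) a))) := by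
  have hb0 : b 0 = 0 := (hb 0 (by omega) (by omega)).trans ha
  have hcongr : ∀ s t, (t < -i ∨ (-i < s ∧ t < i) ∨ i < s) →
      monoOn x (segment s t) b = monoOn x (segment s t) a := fun s t hst =>
    monoOn_congr x fun j hj => hb j (by rw [mem_segment] at hj; omega)
      (by rw [mem_segment] at hj; omega)
  change monoOn x (idxList n) b = _
  -- reinsert the index `0` removed by `idxList`: harmless, as `x 0 ^ b 0 = 1`
  rw [idxList_eq_filter_segment, monoOn_filter x b _ _ fun j _ hj => by simp_all,
    segment_eq_split hi hin]
  simp only [monoOn_append, monoOn_cons]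
  rw [hcongr _ _ (by omega), hcongr _ _ (by omega), hcongr _ _ (by omega)]

namespace IsQSymplectic

variable (hx : IsQSymplectic q n x)
include hx

theorem x_mul_monoOn_lower {p : ℤ} (hp : p ≠ 0) (hip : -i ≤ p) (hpi : p ≤ i) (hin : i ≤ n) :
    x p * monoOn x (segment (-n) (-i - 1)) a
      = monoOn (fun _ => q) (segment (-n) (-i - 1)) a •
          (monoOn x (segment (-n) (-i - 1)) a * x p) :=
  mul_monoOn_of_forall fun j hj _ => by
    rw [mem_segment] at hj
    exact hx.comm j p (by omega) (by omega) (by omega) hp (by omega) (by omega)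

theorem monoOn_upper_mul_x {p : ℤ} (hp : p ≠ 0) (hip : -i ≤ p) (hpi : p ≤ i) (hin : i ≤ n) :
    monoOn x (segment (i + 1) n) a * x p
      = monoOn (fun _ => q) (segment (i + 1) n) a • (x p * monoOn x (segment (i + 1) n) a) :=
  monoOn_mul_of_forall fun j hj _ => by
    rw [mem_segment] at hj
    exact hx.comm p j (by omega) (by omega) hp (by omega) (by omega) (by omega)

theorem x_mul_monoOn_middle (hin : i ≤ n) (ha : a 0 = 0) :
    x i * monoOn x (segment (1 - i) (i - 1)) a
      = monoOn (fun _ => q) (segment (1 - i) (i - 1)) a •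
          (monoOn x (segment (1 - i) (i - 1)) a * x i) :=
  mul_monoOn_of_forall fun j hj hj0 => by
    rw [mem_segment] at hj
    exact hx.comm j i (by omega) hin (by rintro rfl; exact hj0 ha) (by omega) (by omega) (by omega)

theorem monoOn_middle_mul_x_neg (hin : i ≤ n) (ha : a 0 = 0) :
    monoOn x (segment (1 - i) (i - 1)) a * x (-i)
      = monoOn (fun _ => q) (segment (1 - i) (i - 1)) a •
          (x (-i) * monoOn x (segment (1 - i) (i - 1)) a) :=
  monoOn_mul_of_forall fun j hj hj0 => by
    rw [mem_segment] at hj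
    exact hx.comm (-i) j (by omega) (by omega) (by omega) (by rintro rfl; exact hj0 ha) (by omega)
      (by omega)

theorem commute_Om_monoOn_middle (ha : a 0 = 0) :
    Commute (Om q x n (i + 1)) (monoOn x (segment (1 - i) (i - 1)) a) :=
  commute_monoOn_of_forall fun j hj hj0 => by
    rw [mem_segment] at hj
    exact hx.commute_Om (by rintro rfl; exact hj0 ha) (by omega) (by omega)

theorem monoOn_lower_mul_Om (hq : q ≠ 0) (hi : 1 ≤ i) :
    monoOn x (segment (-n) (-i - 1)) a * Om q x n (i + 1)
      = (∏ j ∈ Finset.Icc (-(n : ℤ)) (-i - 1), q ^ (-2 * (a j : ℤ))) •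
          (Om q x n (i + 1) * monoOn x (segment (-n) (-i - 1)) a) := by
  have hc : ∀ j ∈ segment (-n) (-i - 1), a j ≠ 0 →
      x j * Om q x n (i + 1) = q ^ (-2 : ℤ) • (Om q x n (i + 1) * x j) := fun j hj _ => by
    rw [mem_segment] at hj
    rw [show j = -(-j) by ring, hx.Om_mul_x_neg hq (by omega) (by omega) (by omega), smul_smul,
      ← zpow_natCast, ← zpow_add₀ hq]
    simp
  rw [monoOn_mul_of_forall hc, monoOn_const_segment]
  congr 1
  refine Finset.prod_congr rfl fun j _ => ?_
  rw [← zpow_natCast, ← zpow_mul, mul_comm]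

theorem x_neg_mul_mono (hi : 1 ≤ i) (hin : i ≤ n) (ha : a 0 = 0) :
    x (-i) * mono x n a
      = (∏ j ∈ Finset.Icc (-(n : ℤ)) (-i - 1), q ^ a j) • mono x n (a + Pi.single (-i) 1) := by
  have hne : i ≠ -i := by omega
  rw [mono_eq_split hi hin ha (b := a) fun _ _ _ => rfl,
    mono_eq_split hi hin ha (b := a + Pi.single (-i) 1) fun j _ hj => by simp [hj],
    mul_mul_of_mul_eq_smul (hx.x_mul_monoOn_lower (by omega) le_rfl (by omega) hin),
    ← mul_assoc (x (-i)), ← pow_succ', monoOn_const_segment]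
  simp [hne]

theorem mono_mul_x (hi : 1 ≤ i) (hin : i ≤ n) (ha : a 0 = 0) :
    mono x n a * x i
      = (∏ j ∈ Finset.Icc (i + 1) (n : ℤ), q ^ a j) • mono x n (a + Pi.single i 1) := by
  have hne : -i ≠ i := by omega
  rw [mono_eq_split hi hin ha (b := a) fun _ _ _ => rfl,
    mono_eq_split hi hin ha (b := a + Pi.single i 1) fun j hj _ => by simp [hj]]
  simp only [mul_assoc]
  rw [hx.monoOn_upper_mul_x (by omega) (by omega) le_rfl hin]
  simp only [mul_smul_comm]
  rw [← mul_assoc (x i ^ a i), ← pow_succ, monoOn_const_segment]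
  simp [hne]

theorem x_mul_mono (hq : q ≠ 0) (hi : 1 ≤ i) (hin : i ≤ n) (ha : a 0 = 0) :
    x i * mono x n a
      = ((∏ j ∈ Finset.Icc (-(n : ℤ)) (i - 1), q ^ a j) * q ^ a (-i)) •
          mono x n (a + Pi.single i 1)
        + ((∏ j ∈ Finset.Icc (-(n : ℤ)) (-i - 1), q ^ (-(a j : ℤ)))
            * q ^ ((a (-i) : ℤ) + 1) * (q - q⁻¹) * qnum q (a (-i))) •
          (Om q x n (i + 1) * mono x n (a - Pi.single (-i) 1)) := by
  have hne : -i ≠ i := by omega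
  rw [mono_eq_split hi hin ha (b := a) fun _ _ _ => rfl,
    mono_eq_split hi hin ha (b := a + Pi.single i 1) fun j hj _ => by simp [hj],
    mono_eq_split hi hin ha (b := a - Pi.single (-i) 1) fun j _ hj => by simp [hj]]
  simp only [Pi.add_apply, Pi.sub_apply, Pi.single_eq_same, Pi.single_eq_of_ne hne,
    Pi.single_eq_of_ne hne.symm, add_zero, tsub_zero]
  rw [mul_mul_of_mul_eq_smul (hx.x_mul_monoOn_lower (by omega) (by omega) le_rfl hin),
    ← mul_assoc (x i) (x (-i) ^ _), mul_pow_of_mul_eq_smul_add hq (hx.comm_neg i hi hin)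
      (hx.commute_Om (by omega) (by omega) (by omega))]
  simp only [add_mul, mul_add, smul_mul_assoc, mul_smul_comm, mul_assoc]
  rw [mul_mul_of_mul_eq_smul (hx.x_mul_monoOn_middle hin ha), ← mul_assoc (x i) (x i ^ _),
    ← pow_succ', mul_mul_of_mul_eq_smul (hx.monoOn_lower_mul_Om hq hi)]
  simp only [smul_add, smul_smul, mul_smul_comm]
  match_scalars
  · rw [prod_Icc_eq_mul_mul _ (r := -i) (by omega) (by omega), neg_add_eq_sub,
      monoOn_const_segment, monoOn_const_segment]
    ring
  · have hneg : ∀ j ∈ Finset.Icc (-(n : ℤ)) (-i - 1),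
        q ^ (-(a j : ℤ)) = q ^ a j * q ^ (-2 * (a j : ℤ)) :=
      fun j _ => by rw [← zpow_natCast, ← zpow_add₀ hq]; ring_nf
    rw [Finset.prod_congr rfl hneg, Finset.prod_mul_distrib, monoOn_const_segment,
      show ((a (-i) : ℤ) + 1) = ((a (-i) + 1 : ℕ) : ℤ) by push_cast; ring, zpow_natCast]
    ring

theorem mono_mul_x_neg (hq : q ≠ 0) (hi : 1 ≤ i) (hin : i ≤ n) (ha : a 0 = 0) :
    mono x n a * x (-i)
      = ((∏ j ∈ Finset.Icc (1 - i) (n : ℤ), q ^ a j) * q ^ a i) •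
          mono x n (a + Pi.single (-i) 1)
        + ((∏ j ∈ Finset.Icc i (n : ℤ), q ^ a j)
            * (∏ j ∈ Finset.Icc (-(n : ℤ)) (-i - 1), q ^ (-2 * (a j : ℤ)))
            * q * (q - q⁻¹) * qnum q (a i)) •
          (Om q x n (i + 1) * mono x n (a - Pi.single i 1)) := by
  have hne : -i ≠ i := by omega
  rw [mono_eq_split hi hin ha (b := a) fun _ _ _ => rfl,
    mono_eq_split hi hin ha (b := a + Pi.single (-i) 1) fun j _ hj => by simp [hj],
    mono_eq_split hi hin ha (b := a - Pi.single i 1) fun j hj _ => by simp [hj]]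
  simp only [Pi.add_apply, Pi.sub_apply, Pi.single_eq_same, Pi.single_eq_of_ne hne,
    Pi.single_eq_of_ne hne.symm, add_zero, tsub_zero, mul_assoc]
  have hOm : Commute (Om q x n (i + 1)) (x (-i)) := hx.commute_Om (by omega) (by omega) (by omega)
  rw [hx.monoOn_upper_mul_x (by omega) le_rfl (by omega) hin, mul_smul_comm, mul_smul_comm,
    mul_smul_comm, mul_smul_comm, ← mul_assoc (x i ^ _) (x (-i)), pow_mul_of_mul_eq_smul_add hq
      (hx.comm_neg i hi hin) (hx.commute_Om (by omega) (by omega) (by omega))]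
  simp only [add_mul, mul_add, smul_mul_assoc, mul_smul_comm, mul_assoc]
  rw [mul_mul_of_mul_eq_smul (hx.monoOn_middle_mul_x_neg hin ha), mul_smul_comm,
    mul_smul_comm, ← mul_assoc (x (-i) ^ a (-i)) (x (-i)), ← pow_succ,
    (hx.commute_Om_monoOn_middle ha).symm.left_comm,
    ((hOm.pow_right _).symm).left_comm, mul_mul_of_mul_eq_smul (hx.monoOn_lower_mul_Om hq hi)]
  simp only [smul_add, smul_smul]
  match_scalars
  · rw [prod_Icc_eq_mul_mul _ (r := i) (by omega) hin, monoOn_const_segment,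
      monoOn_const_segment]
    ring
  · rw [← Finset.insert_Icc_add_one_left_eq_Icc hin, Finset.prod_insert (by simp),
      monoOn_const_segment]
    ring

end IsQSymplectic

end Monomial

end QSymplectic

theorem stmt6_general {k X : Type*} [Field k] [Ring X] [Algebra k X]
    (n : ℕ) (q : k) (hq : q ≠ 0)
    (x : ℤ → X)
    (hrel1 : ∀ i j : ℤ, -(n : ℤ) ≤ i → j ≤ n → i ≠ 0 → j ≠ 0 → i < j → j ≠ -i →
      x j * x i = q • (x i * x j))
    (hrel2 : ∀ i : ℤ, 1 ≤ i → i ≤ n →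
      x i * x (-i) = (q ^ 2) • (x (-i) * x i) + (q ^ 2 * (q - q⁻¹)) • Om q x n (i + 1)) :
    ∀ i : ℤ, 1 ≤ i → i ≤ n → ∀ a : ℤ → ℕ, a 0 = 0 →
      x (-i) * mono x n a
        = (∏ j ∈ Finset.Icc (-(n : ℤ)) (-i - 1), q ^ a j) • mono x n (a + Pi.single (-i) 1) ∧
      mono x n a * x i
        = (∏ j ∈ Finset.Icc (i + 1) (n : ℤ), q ^ a j) • mono x n (a + Pi.single i 1) ∧
      x i * mono x n a
        = ((∏ j ∈ Finset.Icc (-(n : ℤ)) (i - 1), q ^ a j) * q ^ a (-i)) •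
            mono x n (a + Pi.single i 1)
          + ((∏ j ∈ Finset.Icc (-(n : ℤ)) (-i - 1), q ^ (-(a j : ℤ)))
              * q ^ ((a (-i) : ℤ) + 1) * (q - q⁻¹) * qnum q (a (-i))) •
            (Om q x n (i + 1) * mono x n (a - Pi.single (-i) 1)) ∧
      mono x n a * x (-i)
        = ((∏ j ∈ Finset.Icc (1 - i) (n : ℤ), q ^ a j) * q ^ a i) •
            mono x n (a + Pi.single (-i) 1)
          + ((∏ j ∈ Finset.Icc i (n : ℤ), q ^ a j)
              * (∏ j ∈ Finset.Icc (-(n : ℤ)) (-i - 1), q ^ (-2 * (a j : ℤ)))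
              * q * (q - q⁻¹) * qnum q (a i)) •
            (Om q x n (i + 1) * mono x n (a - Pi.single i 1)) := by
  intro i hi hin a ha
  have hx : QSymplectic.IsQSymplectic q n x := ⟨hrel1, hrel2⟩
  exact ⟨hx.x_neg_mul_mono hi hin ha, hx.mono_mul_x hi hin ha, hx.x_mul_mono hq hi hin ha,
    hx.mono_mul_x_neg hq hi hin ha⟩

/-- Formulas (i)-(iv) for multiplying a normal monomial by a generator. -/
theorem stmt6 {k X : Type*} [Field k] [CharZero k] [Ring X] [Algebra k X]
    (n : ℕ) (hn : 2 ≤ n) (q : k) (hq : q ≠ 0) (hroot : ∀ r : ℕ, r ≠ 0 → q ^ r ≠ 1)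
    (x : ℤ → X)
    (hrel1 : ∀ i j : ℤ, -(n : ℤ) ≤ i → j ≤ n → i ≠ 0 → j ≠ 0 → i < j → j ≠ -i →
      x j * x i = q • (x i * x j))
    (hrel2 : ∀ i : ℤ, 1 ≤ i → i ≤ n →
      x i * x (-i) = (q ^ 2) • (x (-i) * x i) + (q ^ 2 * (q - q⁻¹)) • Om q x n (i + 1)) :
    ∀ i : ℤ, 1 ≤ i → i ≤ n → ∀ a : ℤ → ℕ, a 0 = 0 →
      x (-i) * mono x n a
        = (∏ j ∈ Finset.Icc (-(n : ℤ)) (-i - 1), q ^ a j) • mono x n (a + Pi.single (-i) 1) ∧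
      mono x n a * x i
        = (∏ j ∈ Finset.Icc (i + 1) (n : ℤ), q ^ a j) • mono x n (a + Pi.single i 1) ∧
      x i * mono x n a
        = ((∏ j ∈ Finset.Icc (-(n : ℤ)) (i - 1), q ^ a j) * q ^ a (-i)) •
            mono x n (a + Pi.single i 1)
          + ((∏ j ∈ Finset.Icc (-(n : ℤ)) (-i - 1), q ^ (-(a j : ℤ)))
              * q ^ ((a (-i) : ℤ) + 1) * (q - q⁻¹) * qnum q (a (-i))) •
            (Om q x n (i + 1) * mono x n (a - Pi.single (-i) 1)) ∧
      mono x n a * x (-i)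
        = ((∏ j ∈ Finset.Icc (1 - i) (n : ℤ), q ^ a j) * q ^ a i) •
            mono x n (a + Pi.single (-i) 1)
          + ((∏ j ∈ Finset.Icc i (n : ℤ), q ^ a j)
              * (∏ j ∈ Finset.Icc (-(n : ℤ)) (-i - 1), q ^ (-2 * (a j : ℤ)))
              * q * (q - q⁻¹) * qnum q (a i)) •
            (Om q x n (i + 1) * mono x n (a - Pi.single i 1)) :=
  stmt6_general n q hq x hrel1 hrel2
end
end

section
/- The normal monomials x^a, a ∈ ℕ^{2n}, span the quantum symplectic space 𝒳 as a k-vector space; that is, every element of 𝒳 is a k-linear combination of normal monomials. -/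
noncomputable section

/-!
Read a word `x_{i₁} ⋯ x_{i_m}` in the generators as the base-`(2n+1)` numeral with digits
`i_t + n`. An adjacent descent `x_b x_c` with `c < b` can be rewritten by a defining relation
as a combination of products `x_α x_β` with `α < b`: either `x_b x_c = q x_c x_b`, or `c = -b`
and `x_b x_{-b} = q² x_{-b} x_b + q² λ Σ_{j > b} q^{j-b-1} x_{-j} x_j`. Every word obtained this
way has a smaller numeral, so induction on the numeral writes each word as a combination of
sorted words, and a sorted word is a normal monomial.
-/

open Submodule

theorem List.exists_append_cons_cons_of_not_sortedLE {α : Type*} [LinearOrder α] :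
    ∀ {w : List α}, ¬ w.SortedLE → ∃ u b c v, w = u ++ b :: c :: v ∧ c < b
  | [] => by simp [List.sortedLE_iff_pairwise]
  | [a] => by simp [List.sortedLE_iff_pairwise]
  | a :: b :: w => by
    intro h
    rw [List.sortedLE_iff_isChain, List.isChain_cons_cons, ← List.sortedLE_iff_isChain] at h
    by_cases hab : a ≤ b
    · obtain ⟨u, c, d, v, huv, hdc⟩ := exists_append_cons_cons_of_not_sortedLE (h <| And.intro hab ·)
      exact ⟨a :: u, c, d, v, by rw [huv]; rfl, hdc⟩
    · exact ⟨[], a, b, w, rfl, not_le.1 hab⟩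

theorem List.eq_flatMap_replicate_count {α : Type*} [LinearOrder α] {L w : List α}
    (hL : L.SortedLT) (hw : w.SortedLE) (hwL : ∀ a ∈ w, a ∈ L) :
    w = L.flatMap fun i => List.replicate (w.count i) i := by
  refine List.Perm.eq_of_sortedLE hw ?_ ?_
  · rw [List.sortedLE_iff_pairwise, List.pairwise_flatMap]
    refine ⟨fun i _ => List.pairwise_replicate.2 (Or.inr le_rfl), ?_⟩
    exact hL.pairwise.imp fun hij a ha b hb => by
      rw [List.eq_of_mem_replicate ha, List.eq_of_mem_replicate hb]
      exact hij.le
  · rw [List.perm_iff_count]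
    intro a
    rw [List.count_flatMap, List.sum_map_eq_nsmul_single a]
    · by_cases ha : a ∈ L
      · simp [List.count_eq_one_of_mem hL.nodup ha]
      · simp [List.count_eq_zero.2 (mt (hwL a) ha)]
    · intro b hba _
      simp [List.count_replicate, hba]

/-- `Nat.ofDigits` is little-endian, so the reversal makes the first letter the leading digit. -/
def wordRank (n : ℕ) (w : List ℤ) : ℕ :=
  Nat.ofDigits (2 * n + 1) (w.reverse.map fun a => (a + (n : ℤ)).toNat)

theorem wordRank_append_cons_cons_lt {n : ℕ} (u v : List ℤ) {α β b : ℤ} (c : ℤ)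
    (hα : -(n : ℤ) ≤ α) (hαb : α < b) (hβ : β ≤ n) :
    wordRank n (u ++ α :: β :: v) < wordRank n (u ++ b :: c :: v) := by
  have hβ_digit : (β + (n : ℤ)).toNat < 2 * n + 1 := by omega
  have hα_digit : (α + (n : ℤ)).toNat + 1 ≤ (b + (n : ℤ)).toNat := by omega
  simp only [wordRank, List.reverse_append, List.reverse_cons, List.map_append, List.map_cons,
    List.append_assoc, List.cons_append, List.nil_append, Nat.ofDigits_append,
    Nat.ofDigits_cons, List.length_map, List.length_reverse]
  gcongr ?_ + _ * ?_
  nlinarith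

theorem prod_mem_span_sorted_of_descent {k X : Type*} [CommSemiring k] [Semiring X]
    [Algebra k X] {x : ℤ → X} {A : Set ℤ} {n : ℕ}
    (hA : A ⊆ Set.Icc (-(n : ℤ)) n)
    (hdesc : ∀ b ∈ A, ∀ c ∈ A, c < b →
      x b * x c ∈ span k {y | ∃ α ∈ A, ∃ β ∈ A, α < b ∧ x α * x β = y})
    (w : List ℤ) (hw : ∀ a ∈ w, a ∈ A) :
    (w.map x).prod ∈
      span k {y | ∃ v : List ℤ, v.SortedLE ∧ (∀ a ∈ v, a ∈ A) ∧ (v.map x).prod = y} := by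
  induction hr : wordRank n w using Nat.strong_induction_on generalizing w with
  | _ r ih =>
    by_cases hs : w.SortedLE
    · exact subset_span ⟨w, hs, hw, rfl⟩
    obtain ⟨u, b, c, v, rfl, hcb⟩ := List.exists_append_cons_cons_of_not_sortedLE hs
    have hb : b ∈ A := hw b (by simp)
    let f : X →ₗ[k] X := LinearMap.mulLeft k (u.map x).prod ∘ₗ LinearMap.mulRight k (v.map x).prod
    have hf : ∀ α β, f (x α * x β) = ((u ++ α :: β :: v).map x).prod := by
      intro α β
      simp [f, mul_assoc]
    have hmem := apply_mem_span_image_of_mem_span f (hdesc b hb c (hw c (by simp)) hcb)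
    rw [hf] at hmem
    refine span_le.2 ?_ hmem
    rintro _ ⟨_, ⟨α, hα, β, hβ, hαb, rfl⟩, rfl⟩
    refine hf α β ▸ ih _ ?_ _ ?_ rfl
    · exact hr ▸ wordRank_append_cons_cons_lt u v c (hA hα).1 hαb (hA hβ).2
    · intro a ha
      simp only [List.mem_append, List.mem_cons] at ha
      rcases ha with ha | rfl | rfl | ha
      · exact hw a (by simp [ha])
      · exact hα
      · exact hβ
      · exact hw a (by simp [ha])

theorem exists_list_prod_eq_of_mem_closure_image {M : Type*} [Monoid M] {x : ℤ → M} {A : Set ℤ}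
    {y : M} (hy : y ∈ Submonoid.closure (x '' A)) :
    ∃ w : List ℤ, (∀ a ∈ w, a ∈ A) ∧ (w.map x).prod = y := by
  induction hy using Submonoid.closure_induction with
  | mem _ h =>
    obtain ⟨a, ha, rfl⟩ := h
    exact ⟨[a], by simpa using ha, by simp⟩
  | one => exact ⟨[], by simp, rfl⟩
  | mul _ _ _ _ h₁ h₂ =>
    obtain ⟨w₁, hw₁, rfl⟩ := h₁
    obtain ⟨w₂, hw₂, rfl⟩ := h₂
    exact ⟨w₁ ++ w₂, fun a ha => (List.mem_append.1 ha).elim (hw₁ a) (hw₂ a), by simp⟩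

theorem mem_idxList {n : ℕ} {i : ℤ} : i ∈ idxList n ↔ i ≠ 0 ∧ -(n : ℤ) ≤ i ∧ i ≤ n := by
  simp only [idxList, List.pure_def, List.bind_eq_flatMap, List.mem_filter, List.mem_map,
    List.mem_flatMap, List.mem_range, Order.lt_add_one_iff, List.mem_cons, List.not_mem_nil,
    or_false, ↓existsAndEq, and_true, bne_iff_ne, ne_eq]
  constructor
  · rintro ⟨⟨a, ha, rfl⟩, h0⟩
    exact ⟨h0, by omega, by omega⟩
  · rintro ⟨h0, h1, h2⟩
    exact ⟨⟨(i + n).toNat, by omega, by omega⟩, h0⟩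

theorem idxList_sortedLT (n : ℕ) : (idxList n).SortedLT := by
  refine (List.Pairwise.filter _ ?_).sortedLT
  simpa [List.pairwise_map, List.pairwise_flatMap] using List.pairwise_lt_range

theorem prod_map_eq_mono {M : Type*} [Monoid M] (x : ℤ → M) (n : ℕ) {w : List ℤ}
    (hw : w.SortedLE) (hwn : ∀ a ∈ w, a ∈ idxList n) :
    (w.map x).prod = mono x n (w.count ·) := by
  conv_lhs => rw [List.eq_flatMap_replicate_count (idxList_sortedLT n) hw hwn]
  simp [mono, List.flatMap_def, List.prod_flatten, Function.comp_def]

theorem mul_mem_span_lower_mul {k X : Type*} [Field k] [Ring X] [Algebra k X]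
    {n : ℕ} {q : k} {x : ℤ → X}
    (hrel1 : ∀ i j : ℤ, -(n : ℤ) ≤ i → j ≤ n → i ≠ 0 → j ≠ 0 → i < j → j ≠ -i →
      x j * x i = q • (x i * x j))
    (hrel2 : ∀ i : ℤ, 1 ≤ i → i ≤ n →
      x i * x (-i) = (q ^ 2) • (x (-i) * x i) + (q ^ 2 * (q - q⁻¹)) • Om q x n (i + 1))
    {A : Set ℤ} (hA : ∀ i, i ∈ A ↔ i ≠ 0 ∧ -(n : ℤ) ≤ i ∧ i ≤ n)
    {b c : ℤ} (hb : b ∈ A) (hc : c ∈ A) (hcb : c < b) :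
    x b * x c ∈ span k {y | ∃ α ∈ A, ∃ β ∈ A, α < b ∧ x α * x β = y} := by
  have hmem : ∀ α ∈ A, ∀ β ∈ A, α < b →
      x α * x β ∈ span k {y | ∃ α ∈ A, ∃ β ∈ A, α < b ∧ x α * x β = y} :=
    fun α hα β hβ hαb => subset_span ⟨α, hα, β, hβ, hαb, rfl⟩
  obtain ⟨hb0, hb₁, hb₂⟩ := (hA b).1 hb
  obtain ⟨hc0, hc₁, -⟩ := (hA c).1 hc
  by_cases hbc : c = -b
  · subst hbc
    rw [hrel2 b (by omega) hb₂, Om]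
    refine add_mem (smul_mem _ _ (hmem _ hc _ hb hcb)) (smul_mem _ _ ?_)
    refine sum_mem fun j hj => smul_mem _ _ ?_
    rw [Finset.mem_Icc] at hj
    exact hmem _ ((hA _).2 ⟨by omega, by omega, by omega⟩) _ ((hA _).2 ⟨by omega, by omega, hj.2⟩)
      (by omega)
  · rw [hrel1 c b hc₁ hb₂ hc0 hb0 hcb (by omega)]
    exact smul_mem _ _ (hmem _ hc _ hb hcb)

theorem stmt8_general {k X : Type*} [Field k] [Ring X] [Algebra k X]
    (n : ℕ) (q : k)
    (x : ℤ → X)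
    (hrel1 : ∀ i j : ℤ, -(n : ℤ) ≤ i → j ≤ n → i ≠ 0 → j ≠ 0 → i < j → j ≠ -i →
      x j * x i = q • (x i * x j))
    (hrel2 : ∀ i : ℤ, 1 ≤ i → i ≤ n →
      x i * x (-i) = (q ^ 2) • (x (-i) * x i) + (q ^ 2 * (q - q⁻¹)) • Om q x n (i + 1))
    (hgen : Algebra.adjoin k (x '' {i : ℤ | i ≠ 0 ∧ -(n : ℤ) ≤ i ∧ i ≤ n}) = ⊤) :
    ∀ u : X, u ∈ Submodule.span k (Set.range (mono x n)) := by
  set A := {i : ℤ | i ≠ 0 ∧ -(n : ℤ) ≤ i ∧ i ≤ n}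
  intro u
  have hu : u ∈ span k (Submonoid.closure (x '' A)) := by
    rw [← Algebra.adjoin_eq_span, hgen]
    trivial
  refine span_le.2 (fun y hy => ?_) hu
  obtain ⟨w, hwA, rfl⟩ := exists_list_prod_eq_of_mem_closure_image hy
  have hsorted := prod_mem_span_sorted_of_descent (fun i hi => ⟨hi.2.1, hi.2.2⟩)
    (fun b hb c hc hcb => mul_mem_span_lower_mul hrel1 hrel2 (fun _ => Iff.rfl) hb hc hcb) w hwA
  refine span_mono ?_ hsorted
  rintro _ ⟨v, hv, hvA, rfl⟩
  exact ⟨_, (prod_map_eq_mono x n hv fun a ha => mem_idxList.2 (hvA a ha)).symm⟩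

/-- The normal monomials span the quantum symplectic space: in any algebra generated by
elements `x_i` (`i ∈ I`) subject to the defining relations of `𝒳` (in particular in the
presented algebra `𝒳` itself), every element is a `k`-linear combination of the normal
monomials `x^a`. -/
theorem stmt8 {k X : Type*} [Field k] [CharZero k] [Ring X] [Algebra k X]
    (n : ℕ) (hn : 2 ≤ n) (q : k) (hq : q ≠ 0) (hroot : ∀ r : ℕ, r ≠ 0 → q ^ r ≠ 1)
    (x : ℤ → X)
    (hrel1 : ∀ i j : ℤ, -(n : ℤ) ≤ i → j ≤ n → i ≠ 0 → j ≠ 0 → i < j → j ≠ -i →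
      x j * x i = q • (x i * x j))
    (hrel2 : ∀ i : ℤ, 1 ≤ i → i ≤ n →
      x i * x (-i) = (q ^ 2) • (x (-i) * x i) + (q ^ 2 * (q - q⁻¹)) • Om q x n (i + 1))
    (hgen : Algebra.adjoin k (x '' {i : ℤ | i ≠ 0 ∧ -(n : ℤ) ≤ i ∧ i ≤ n}) = ⊤) :
    ∀ u : X, u ∈ Submodule.span k (Set.range (mono x n)) :=
  stmt8_general n q x hrel1 hrel2 hgen
end
end
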